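/- arXiv:1505.06326 — 4 statements merged into one kernel-verified Lean document; each statement's English description precedes it below -/
import Mathlib

section
/- Let p be an odd prime and let m ≥ 2 be an even integer. Then the double sum ∑_{y ∈ F_p^*} ∑_{x ∈ F_{p^m}} ζ_p^{y·Tr(x²)} equals (−1)^{m−1}·(−1)^{(m/2)·((p−1)/2)²}·(p−1)·p^{m/2}, where y·Tr(x²) denotes the product in F_p of y with the trace of x². -/
set_option maxHeartbeats 1000000

/-- `ζ_p ^ c` for `c ∈ F_p`, where `ζ_p = exp(2πi/p)`. Well defined via `c.val`. -/
noncomputable def zetaPow (p : ℕ) (c : ZMod p) : ℂ :=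
  Complex.exp (2 * Real.pi * Complex.I / p) ^ c.val


open Finset AddChar Polynomial

lemma sum_psi_sq {K : Type*} [Field K] [Fintype K] [DecidableEq K]
    (hK2 : ringChar K ≠ 2) (ψ : AddChar K ℂ) (hψ : ψ.IsPrimitive) {a : K} (ha : a ≠ 0) :
    ∑ u : K, ψ (a * u ^ 2) =
      ((quadraticChar K).ringHomComp (Int.castRingHom ℂ)) a *
        gaussSum ((quadraticChar K).ringHomComp (Int.castRingHom ℂ)) ψ := by
  set χ := (quadraticChar K).ringHomComp (Int.castRingHom ℂ) with hχ
  have h1 : ∑ u : K, ψ (a * u ^ 2) = ∑ t : K, (χ t + 1) * ψ (a * t) := by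
    calc ∑ u : K, ψ (a * u ^ 2)
        = ∑ t : K, ∑ u ∈ univ.filter (fun u => u ^ 2 = t), ψ (a * u ^ 2) :=
          (Finset.sum_fiberwise_of_maps_to (fun u _ => mem_univ _) _).symm
      _ = ∑ t : K, ∑ u ∈ univ.filter (fun u => u ^ 2 = t), ψ (a * t) := by
          refine sum_congr rfl fun t _ => sum_congr rfl fun u hu => ?_
          rw [(mem_filter.mp hu).2]
      _ = ∑ t : K, ((univ.filter fun u => u ^ 2 = t).card : ℂ) * ψ (a * t) := by
          simp [sum_const, nsmul_eq_mul]
      _ = ∑ t : K, (χ t + 1) * ψ (a * t) := by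
          refine sum_congr rfl fun t _ => ?_
          have hq := quadraticChar_card_sqrts hK2 t
          have hset : {x : K | x ^ 2 = t}.toFinset = univ.filter fun u => u ^ 2 = t := by
            ext; simp
          rw [hset] at hq
          congr 1
          have : χ t = ((quadraticChar K t : ℤ) : ℂ) := rfl
          rw [this]
          exact_mod_cast hq
  rw [h1]
  simp_rw [add_mul, one_mul]
  rw [sum_add_distrib]
  have h2 : ∑ t : K, ψ (a * t) = 0 := by
    have := AddChar.sum_mulShift a hψ
    simp only [ha, if_neg, if_false] at this
    simpa [mul_comm] using this
  have hg : gaussSum χ (AddChar.mulShift ψ a) = ∑ t : K, χ t * ψ (a * t) := by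
    simp [gaussSum, AddChar.mulShift_apply]
  have hsq : χ a * χ a = 1 := by
    rw [← map_mul, ← sq]
    have : quadraticChar K (a ^ 2) = 1 := quadraticChar_sq_one' ha
    show ((quadraticChar K (a ^ 2) : ℤ) : ℂ) = 1
    rw [this]; norm_num
  have h3 : ∑ t : K, χ t * ψ (a * t) = χ a * gaussSum χ ψ := by
    have hmul := gaussSum_mulShift χ ψ ha.isUnit.unit
    rw [IsUnit.unit_spec] at hmul
    rw [← hg, ← hmul, ← mul_assoc, hsq, one_mul]
  rw [h2, h3, add_zero]

lemma parity_aux (p : ℕ) (hp : Odd p) (k : ℕ) :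
    (-1 : ℂ) ^ (p ^ k / 2) = (-1) ^ (k * ((p - 1) / 2)) := by
  obtain ⟨b, hb⟩ := id hp
  induction k with
  | zero => simp
  | succ k ih =>
    obtain ⟨a, ha⟩ := (hp.pow (n := k) : Odd (p ^ k))
    have h1 : p ^ k / 2 = a := by omega
    have h2 : p ^ (k + 1) / 2 = 2 * a * b + a + b := by
      have e1 : p ^ (k + 1) = p ^ k * p := by ring
      have e2 : (2 * a + 1) * (2 * b + 1) = 2 * (2 * a * b + a + b) + 1 := by ring
      rw [e1, ha, hb] at *
      omega
    have h3 : (p - 1) / 2 = b := by omega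
    rw [h2, h3]
    rw [h1, h3] at ih
    have h4 : (k + 1) * b = k * b + b := by ring
    have h5 : 2 * a * b + a + b = a + b + 2 * (a * b) := by ring
    rw [h4, h5, pow_add, pow_add, pow_add, pow_mul, ← ih]
    norm_num


theorem stmt_5 (p m : ℕ) [Fact p.Prime] (hp : Odd p) (hm : 2 ≤ m) (hmeven : Even m)
    (F : Type*) [Field F] [Fintype F] [Algebra (ZMod p) F]
    (hcard : Fintype.card F = p ^ m) :
    ∑ y ∈ Finset.univ \ {0},
      ∑ x : F, zetaPow p (y * Algebra.trace (ZMod p) F (x ^ 2)) =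
      (-1 : ℂ) ^ (m - 1) * (-1 : ℂ) ^ (m / 2 * ((p - 1) / 2) ^ 2) *
        ((p : ℂ) - 1) * (p : ℂ) ^ (m / 2) := by
  classical
  have hpp : p.Prime := Fact.out
  have hp2 : p ≠ 2 := by rintro rfl; exact (Nat.not_odd_iff_even.mpr even_two) hp
  obtain ⟨k, hkk⟩ := hmeven
  have hm2k : m = 2 * k := by omega
  have hk0 : k ≠ 0 := by omega
  -- the field K of cardinality p^k
  set K := GaloisField p k with hK
  letI : Fintype K := Fintype.ofFinite K
  have hKcard : Fintype.card K = p ^ k := by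
    rw [← Nat.card_eq_fintype_card]; exact GaloisField.card p k hk0
  have hchK : ringChar K = p := ringChar.eq K p
  have hK2 : ringChar K ≠ 2 := by rw [hchK]; exact hp2
  obtain ⟨d, hd⟩ := FiniteField.exists_nonsquare (F := K) hK2
  have hd0 : d ≠ 0 := fun h => hd ⟨0, by rw [h]; ring⟩
  -- the quadratic extension F' = K(√d)
  have hirr : Irreducible (X ^ 2 - C d : K[X]) :=
    X_pow_sub_C_irreducible_of_prime Nat.prime_two (fun b hb => hd ⟨b, by rw [← hb]; ring⟩)
  haveI : Fact (Irreducible (X ^ 2 - C d : K[X])) := ⟨hirr⟩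
  set F' := AdjoinRoot (X ^ 2 - C d : K[X]) with hF'
  have hf0 : (X ^ 2 - C d : K[X]) ≠ 0 := hirr.ne_zero
  have hfmonic : (X ^ 2 - C d : K[X]).Monic := monic_X_pow_sub_C d (by norm_num)
  have hfdeg : (X ^ 2 - C d : K[X]).natDegree = 2 := by
    rw [natDegree_X_pow_sub_C]
  set pb := AdjoinRoot.powerBasis hf0 with hpb
  letI : Fintype F' := Fintype.ofEquiv _ pb.basis.equivFun.toEquiv.symm
  have hcardF' : Fintype.card F' = p ^ m := by
    rw [Module.card_fintype pb.basis, hKcard, Fintype.card_fin, AdjoinRoot.powerBasis_dim,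
      hfdeg, ← pow_mul, hm2k]
    congr 1; omega
  haveI : Module.Finite K F' := Module.Finite.of_basis pb.basis
  -- transport the sum from F to F'
  have e : F ≃ₐ[ZMod p] F' := FiniteField.algEquivOfCardEq p (hcard.trans hcardF'.symm)
  have hsumF : ∀ y : ZMod p,
      ∑ x : F, zetaPow p (y * Algebra.trace (ZMod p) F (x ^ 2))
        = ∑ x : F', zetaPow p (y * Algebra.trace (ZMod p) F' (x ^ 2)) := by
    intro y
    refine Fintype.sum_bijective e e.bijective _ _ fun x => ?_
    rw [← map_pow, Algebra.trace_eq_of_algEquiv e (x ^ 2)]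
  -- additive characters
  have hζ1 : Complex.exp (2 * Real.pi * Complex.I / p) ^ p = 1 :=
    (Complex.isPrimitiveRoot_exp p hpp.ne_zero).pow_eq_one
  set ψ₀ : AddChar (ZMod p) ℂ := AddChar.zmodChar p hζ1 with hψ₀def
  have hzeta : ∀ c : ZMod p, zetaPow p c = ψ₀ c := fun c => rfl
  have hψ₀prim : ψ₀.IsPrimitive :=
    AddChar.zmodChar_primitive_of_primitive_root p (Complex.isPrimitiveRoot_exp p hpp.ne_zero)
  set ψ : AddChar K ℂ := ψ₀.compAddMonoidHom (Algebra.trace (ZMod p) K).toAddMonoidHom with hψdef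
  have hψapp : ∀ c : K, ψ c = ψ₀ (Algebra.trace (ZMod p) K c) := fun c => rfl
  have hψne : ψ ≠ 1 := by
    have h0 : Algebra.trace (ZMod p) K ≠ 0 := Algebra.trace_ne_zero (ZMod p) K
    obtain ⟨a, ha⟩ : ∃ a, Algebra.trace (ZMod p) K a ≠ 0 := by
      by_contra hf; push_neg at hf; exact h0 (LinearMap.ext hf)
    refine AddChar.ne_one_iff.mpr ⟨a, fun hfa => ha ?_⟩
    exact (AddChar.IsPrimitive.zmod_char_eq_one_iff p hψ₀prim _).mp hfa
  have hψprim : ψ.IsPrimitive := AddChar.IsPrimitive.of_ne_one hψne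
  set χ := (quadraticChar K).ringHomComp (Int.castRingHom ℂ) with hχdef
  set G := gaussSum χ ψ with hGdef
  have hχne1 : χ ≠ 1 :=
    (MulChar.ringHomComp_ne_one_iff (RingHom.injective_int _)).mpr (quadraticChar_ne_one hK2)
  have hχquad : χ.IsQuadratic := (quadraticChar_isQuadratic K).comp _
  have hG2 : G ^ 2 = χ (-1) * Fintype.card K := gaussSum_sq hχne1 hχquad hψprim
  -- structure of F'
  set s : F' := AdjoinRoot.root _ with hsdef
  have hs2 : s ^ 2 = algebraMap K F' d := by
    have h := AdjoinRoot.eval₂_root (X ^ 2 - C d : K[X])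
    rw [AdjoinRoot.algebraMap_eq]
    simp only [eval₂_sub, eval₂_pow, eval₂_X, eval₂_C] at h
    linear_combination h
  have hfinrank : Module.finrank K F' = 2 := by
    rw [pb.finrank, hpb, AdjoinRoot.powerBasis_dim, hfdeg]
  have htr1 : ∀ c : K, Algebra.trace K F' (algebraMap K F' c) = 2 * c := by
    intro c
    rw [Algebra.trace_algebraMap, hfinrank]
    rw [nsmul_eq_mul]; norm_num
  have hgen : pb.gen = s := AdjoinRoot.powerBasis_gen hf0
  have htrs : Algebra.trace K F' s = 0 := by
    rw [← hgen, PowerBasis.trace_gen_eq_nextCoeff_minpoly, hgen]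
    have hmin : minpoly K s = X ^ 2 - C d := by
      rw [hsdef, AdjoinRoot.minpoly_root hf0, hfmonic.leadingCoeff]
      simp
    rw [hmin]
    rw [Polynomial.nextCoeff]
    simp [hfdeg, coeff_X_pow, coeff_C]
  have htrace_sq : ∀ u v : K,
      Algebra.trace K F' ((algebraMap K F' u + algebraMap K F' v * s) ^ 2)
        = 2 * u ^ 2 + 2 * d * v ^ 2 := by
    intro u v
    have hexp : (algebraMap K F' u + algebraMap K F' v * s) ^ 2
        = algebraMap K F' (u ^ 2 + d * v ^ 2) + algebraMap K F' (2 * u * v) * s := by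
      have h0 : (algebraMap K F' u + algebraMap K F' v * s) ^ 2
          = (algebraMap K F' u) ^ 2 + (algebraMap K F' v) ^ 2 * s ^ 2
            + 2 * algebraMap K F' u * (algebraMap K F' v * s) := by ring
      rw [h0, hs2]
      simp only [map_add, map_mul, map_pow, map_ofNat]
      ring
    rw [hexp, map_add, htr1]
    have h2 : Algebra.trace K F' (algebraMap K F' (2 * u * v) * s) = 0 := by
      rw [← Algebra.smul_def, map_smul, htrs, smul_zero]
    rw [h2, add_zero]; ring
  -- parametrize F' by K × K
  set Φ : K × K → F' := fun uv => algebraMap K F' uv.1 + algebraMap K F' uv.2 * s with hΦdef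
  have halg_inj : Function.Injective (algebraMap K F') := (algebraMap K F').injective
  have hΦinj : Function.Injective Φ := by
    rintro ⟨u, v⟩ ⟨u', v'⟩ h
    simp only [hΦdef] at h
    by_cases hv : v = v'
    · subst hv
      have : algebraMap K F' u = algebraMap K F' u' := by
        have := add_right_cancel h
        exact this
      exact Prod.ext (halg_inj this) rfl
    · exfalso
      have hA' : algebraMap K F' v - algebraMap K F' v' ≠ 0 :=
        sub_ne_zero.mpr (fun hf => hv (halg_inj hf))
      have hs_eq : s = algebraMap K F' ((u' - u) / (v - v')) := by
        rw [map_div₀, map_sub, map_sub, eq_div_iff hA']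
        linear_combination h
      have hAd : algebraMap K F' d
          = algebraMap K F' (((u' - u) / (v - v')) * ((u' - u) / (v - v'))) := by
        rw [map_mul, ← hs_eq, ← sq, hs2]
      exact hd ⟨_, halg_inj hAd⟩
  have hΦbij : Function.Bijective Φ :=
    (Fintype.bijective_iff_injective_and_card Φ).mpr
      ⟨hΦinj, by rw [Fintype.card_prod, hKcard, hcardF', ← pow_add, hm2k]; ring_nf⟩
  have h2K : (2 : K) ≠ 0 := Ring.two_ne_zero hK2
  -- the key evaluation of the inner sum
  have key : ∀ y : ZMod p, y ≠ 0 →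
      ∑ x : F', ψ₀ (y * Algebra.trace (ZMod p) F' (x ^ 2)) = -(χ (-1) * (p : ℂ) ^ k) := by
    intro y hy
    have hyK : algebraMap (ZMod p) K y ≠ 0 := fun hf =>
      hy ((algebraMap (ZMod p) K).injective (by rw [hf, map_zero]))
    set c := algebraMap (ZMod p) K y with hcdef
    have htr' : ∀ x : F', y * Algebra.trace (ZMod p) F' (x ^ 2)
        = Algebra.trace (ZMod p) K (c * Algebra.trace K F' (x ^ 2)) := by
      intro x
      rw [← Algebra.trace_trace (S := K) (x ^ 2), hcdef, ← Algebra.smul_def, map_smul,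
        smul_eq_mul]
    have hstep : ∑ x : F', ψ₀ (y * Algebra.trace (ZMod p) F' (x ^ 2))
        = (∑ u : K, ψ ((2 * c) * u ^ 2)) * (∑ v : K, ψ ((2 * c * d) * v ^ 2)) := by
      calc ∑ x : F', ψ₀ (y * Algebra.trace (ZMod p) F' (x ^ 2))
          = ∑ uv : K × K, ψ₀ (y * Algebra.trace (ZMod p) F' ((Φ uv) ^ 2)) :=
            (Fintype.sum_bijective Φ hΦbij _ _ fun uv => rfl).symm
        _ = ∑ uv : K × K, ψ ((2 * c) * uv.1 ^ 2) * ψ ((2 * c * d) * uv.2 ^ 2) := by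
            refine Fintype.sum_congr _ _ fun uv => ?_
            obtain ⟨u, v⟩ := uv
            rw [htr' (Φ (u, v))]
            have hΦuv : Φ (u, v) = algebraMap K F' u + algebraMap K F' v * s := rfl
            rw [hΦuv, htrace_sq u v]
            have harg : c * (2 * u ^ 2 + 2 * d * v ^ 2)
                = (2 * c) * u ^ 2 + (2 * c * d) * v ^ 2 := by ring
            rw [harg, map_add, AddChar.map_add_eq_mul, ← hψapp, ← hψapp]
        _ = (∑ u : K, ψ ((2 * c) * u ^ 2)) * (∑ v : K, ψ ((2 * c * d) * v ^ 2)) := by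
            rw [Fintype.sum_prod_type]
            exact (Finset.sum_mul_sum Finset.univ Finset.univ
              (fun u => ψ ((2 * c) * u ^ 2)) (fun v => ψ ((2 * c * d) * v ^ 2))).symm
    rw [hstep, sum_psi_sq hK2 ψ hψprim (mul_ne_zero h2K hyK),
      sum_psi_sq hK2 ψ hψprim (by exact mul_ne_zero (mul_ne_zero h2K hyK) hd0)]
    have hχd : χ d = -1 := by
      have : quadraticChar K d = -1 := quadraticChar_neg_one_iff_not_isSquare.mpr hd
      show ((quadraticChar K d : ℤ) : ℂ) = -1
      rw [this]; norm_num
    have hχsq : χ (2 * c) * χ (2 * c) = 1 := by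
      rw [← map_mul, ← sq]
      have : quadraticChar K ((2 * c) ^ 2) = 1 := quadraticChar_sq_one' (mul_ne_zero h2K hyK)
      show ((quadraticChar K ((2 * c) ^ 2) : ℤ) : ℂ) = 1
      rw [this]; norm_num
    calc χ (2 * c) * G * (χ (2 * c * d) * G)
        = (χ (2 * c) * χ (2 * c)) * χ d * G ^ 2 := by
          have hmm : χ (2 * c * d) = χ (2 * c) * χ d := map_mul χ _ _
          rw [hmm]; ring
      _ = χ d * (χ (-1) * (Fintype.card K : ℂ)) := by rw [hχsq, one_mul, hG2]
      _ = -(χ (-1) * (p : ℂ) ^ k) := by rw [hχd, hKcard]; push_cast; ring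
  -- evaluate the sign
  have hη : χ (-1) = (-1 : ℂ) ^ (k * ((p - 1) / 2)) := by
    have h4 : quadraticChar K (-1) = ZMod.χ₄ (Fintype.card K) := quadraticChar_neg_one hK2
    have hodd : p ^ k % 2 = 1 := Nat.odd_iff.mp hp.pow
    have h5 : ZMod.χ₄ ((p ^ k : ℕ) : ZMod 4) = (-1 : ℤ) ^ (p ^ k / 2) :=
      ZMod.χ₄_eq_neg_one_pow hodd
    have hχm1 : χ (-1) = ((quadraticChar K (-1) : ℤ) : ℂ) := rfl
    rw [hχm1, h4, hKcard, h5]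
    push_cast
    exact parity_aux p hp k
  -- assemble
  have hfinal : ∀ y ∈ Finset.univ \ ({0} : Finset (ZMod p)),
      ∑ x : F, zetaPow p (y * Algebra.trace (ZMod p) F (x ^ 2))
        = -(χ (-1) * (p : ℂ) ^ k) := by
    intro y hy
    have hy0 : y ≠ 0 := by simpa using (Finset.mem_sdiff.mp hy).2
    rw [hsumF y]
    simp_rw [hzeta]
    exact key y hy0
  rw [Finset.sum_congr rfl hfinal, Finset.sum_const]
  have hcard0 : (Finset.univ \ ({0} : Finset (ZMod p))).card = p - 1 := by
    rw [Finset.card_sdiff_of_subset (Finset.subset_univ _), Finset.card_singleton, Finset.card_univ,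
      ZMod.card]
  rw [hcard0, hη]
  have hm1 : (-1 : ℂ) ^ (m - 1) = -1 := Odd.neg_one_pow ⟨k - 1, by omega⟩
  have hm2 : m / 2 = k := by omega
  have hsq2 : (-1 : ℂ) ^ (k * ((p - 1) / 2) ^ 2) = (-1) ^ (k * ((p - 1) / 2)) := by
    rcases Nat.even_or_odd k with hk | hk
    · rw [(hk.mul_right _).neg_one_pow, (hk.mul_right _).neg_one_pow]
    rcases Nat.even_or_odd ((p - 1) / 2) with hb | hb
    · have hb2 : Even (((p - 1) / 2) ^ 2) := by rw [sq]; exact hb.mul_right _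
      rw [(hb2.mul_left _).neg_one_pow, (hb.mul_left _).neg_one_pow]
    · have h1 : Odd (k * ((p - 1) / 2)) := hk.mul hb
      have h2 : Odd (k * ((p - 1) / 2) ^ 2) := hk.mul (hb.pow)
      rw [h1.neg_one_pow, h2.neg_one_pow]
  rw [hm1, hm2, hsq2, nsmul_eq_mul]
  have hp1 : (1 : ℕ) ≤ p := hpp.one_le
  push_cast [Nat.cast_sub hp1]
  ring
end

section
/- Let p be an odd prime, let m ≥ 3 be odd, let a ∈ F_{p^m}^* satisfy Tr(a²) = 0, and let ρ ∈ F_p be arbitrary. Then the triple character sum ∑_{y ∈ F_p^*} ∑_{z ∈ F_p^*} ∑_{x ∈ F_{p^m}} ζ_p^{Tr(y x² + a z x) − zρ} equals 0, where y and z are viewed as elements of F_{p^m} via the embedding of F_p. -/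
open Finset

private lemma geomNatAux (p : ℕ) (hp1 : 1 ≤ p) :
    ∀ M : ℕ, (p - 1) * ∑ i ∈ range M, p ^ i = p ^ M - 1 := by
  intro M
  induction M with
  | zero => simp
  | succ M ih =>
    have h1 : 1 ≤ p ^ M := Nat.one_le_pow _ _ hp1
    rw [Finset.sum_range_succ, Nat.mul_add, ih]
    have : (p - 1) * p ^ M = p ^ (M+1) - p ^ M := by
      rw [Nat.sub_mul, one_mul, pow_succ, Nat.mul_comm]
    have h2 : p ^ M ≤ p ^ (M+1) := Nat.pow_le_pow_right hp1 (by omega)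
    omega

private lemma nonsqFAux (p m : ℕ) [Fact p.Prime] (hp : Odd p) (hmodd : Odd m)
    (F : Type*) [Field F] [Fintype F] [Algebra (ZMod p) F]
    (hcard : Fintype.card F = p ^ m) :
    ∃ n : ZMod p, n ≠ 0 ∧ ¬IsSquare (algebraMap (ZMod p) F n) := by
  have hp1 : 1 ≤ p := (Fact.out (p := p.Prime)).one_lt.le
  have hp2 : p ≠ 2 := by rintro rfl; simp [Nat.odd_iff] at hp
  have hplt : Fact (2 < p) := ⟨lt_of_le_of_ne (Fact.out (p := p.Prime)).two_le (Ne.symm hp2)⟩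
  have hcharZ : ringChar (ZMod p) ≠ 2 := by rw [ZMod.ringChar_zmod_n]; exact hp2
  obtain ⟨n, hn⟩ := FiniteField.exists_nonsquare (F := ZMod p) hcharZ
  have hn0 : n ≠ 0 := by rintro rfl; exact hn ⟨0, by simp⟩
  have hinj : Function.Injective (algebraMap (ZMod p) F) := (algebraMap (ZMod p) F).injective
  haveI : CharP F p := charP_of_injective_algebraMap hinj p
  have hcharF : ringChar F ≠ 2 := by rw [ringChar.eq F p]; exact hp2
  have hN0 : algebraMap (ZMod p) F n ≠ 0 := by
    simpa using hinj.ne_iff.mpr (show n ≠ 0 from hn0)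
  refine ⟨n, hn0, ?_⟩
  have heuler : n ^ (p / 2) = -1 := by
    rcases FiniteField.pow_dichotomy hcharZ hn0 with h | h
    · rw [ZMod.card] at h
      exact absurd ((FiniteField.isSquare_iff hcharZ hn0).mpr (by rw [ZMod.card]; exact h)) hn
    · rwa [ZMod.card] at h
  set k := ∑ i ∈ range m, p ^ i with hkdef
  have hgeom : (p - 1) * k = p ^ m - 1 := geomNatAux p hp1 m
  have hkodd : Odd k := by
    have hmod : k % 2 = m % 2 := by
      rw [hkdef, Finset.sum_nat_mod]
      rw [Finset.sum_congr rfl (fun i _ => (Nat.odd_iff.mp (hp.pow) : p ^ i % 2 = 1))]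
      simp [Nat.odd_iff]
    rw [Nat.odd_iff, hmod, ← Nat.odd_iff]; exact hmodd
  have hsplit : p ^ m / 2 = (p / 2) * k := by
    obtain ⟨s, hs⟩ := (hp.pow : Odd (p ^ m))
    obtain ⟨t, ht⟩ := hp
    have hA : p - 1 = 2 * t := by omega
    have hB : p / 2 = t := by omega
    have hC : p ^ m - 1 = 2 * s := by omega
    rw [hA, hC, mul_assoc] at hgeom
    have htk : t * k = s := by omega
    rw [hB, htk]; omega
  intro hsq
  have h1 : (algebraMap (ZMod p) F n) ^ (Fintype.card F / 2) = 1 :=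
    (FiniteField.isSquare_iff hcharF hN0).mp hsq
  rw [hcard, hsplit, pow_mul, ← map_pow, heuler, map_neg, map_one, hkodd.neg_one_pow] at h1
  exact CharP.neg_one_ne_one F p h1

private lemma sqSumAux (F : Type*) [Field F] [Fintype F] [DecidableEq F] (hF : ringChar F ≠ 2)
    (ψ : AddChar F ℂ) (hψ : ψ ≠ 1) (N : F) (hN : ¬IsSquare N) (b : F) (hb : b ≠ 0) :
    (∑ x : F, ψ (b * x ^ 2)) + (∑ x : F, ψ (b * (N * x ^ 2))) = 0 := by
  have hN0 : N ≠ 0 := by rintro rfl; exact hN ⟨0, by simp⟩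
  have fiber : ∀ f : F → ℂ, ∑ x : F, f (x ^ 2)
      = ∑ c : F, ((univ.filter (fun x : F => x ^ 2 = c)).card : ℂ) * f c := by
    intro f
    rw [← Finset.sum_fiberwise' univ (fun x : F => x ^ 2) f]
    exact Finset.sum_congr rfl fun c _ => by rw [Finset.sum_const, nsmul_eq_mul]
  have hcardq : ∀ c : F, ((univ.filter (fun x : F => x ^ 2 = c)).card : ℂ)
      = ((quadraticChar F c : ℤ) : ℂ) + 1 := by
    intro c
    have h := quadraticChar_card_sqrts hF c
    rw [Set.toFinset_setOf] at h
    exact_mod_cast congrArg (fun t : ℤ => (t : ℂ)) h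
  have hzero : ∀ d : F, d ≠ 0 → ∑ c : F, ψ (d * c) = 0 := by
    intro d hd
    exact (Fintype.sum_equiv (Equiv.mulLeft₀ d hd) (fun c => ψ (d * c)) (fun c => ψ c)
      (fun c => rfl)).trans (AddChar.sum_eq_zero_of_ne_one hψ)
  have hchiN : ((quadraticChar F N⁻¹ : ℤ) : ℂ) = -1 := by
    have : quadraticChar F N⁻¹ = -1 :=
      quadraticChar_neg_one_iff_not_isSquare.mpr (by rwa [isSquare_inv])
    rw [this]; norm_num
  rw [fiber (fun c => ψ (b * c)), fiber (fun c => ψ (b * (N * c)))]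
  have hS2 : ∑ c : F, ((univ.filter (fun x : F => x ^ 2 = c)).card : ℂ) * ψ (b * (N * c))
      = ∑ c : F, ((univ.filter (fun x : F => x ^ 2 = N⁻¹ * c)).card : ℂ) * ψ (b * c) :=
    Fintype.sum_equiv (Equiv.mulLeft₀ N hN0) _ _
      (fun c => by simp [inv_mul_cancel_left₀ hN0])
  rw [hS2]
  rw [← Finset.sum_add_distrib]
  have key : ∀ c : F, ((univ.filter (fun x : F => x ^ 2 = c)).card : ℂ) * ψ (b * c)
      + ((univ.filter (fun x : F => x ^ 2 = N⁻¹ * c)).card : ℂ) * ψ (b * c)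
      = 2 * ψ (b * c) := by
    intro c
    rw [hcardq c, hcardq (N⁻¹ * c), map_mul (quadraticChar F) N⁻¹ c]
    push_cast
    rw [hchiN]
    ring
  rw [Finset.sum_congr rfl (fun c _ => key c), ← Finset.mul_sum, hzero b hb, mul_zero]

theorem stmt_6 (p m : ℕ) [Fact p.Prime] (hp : Odd p) (hm : 3 ≤ m) (hmodd : Odd m)
    (F : Type*) [Field F] [Fintype F] [Algebra (ZMod p) F]
    (hcard : Fintype.card F = p ^ m)
    (a : F) (ha : a ≠ 0) (hTa : Algebra.trace (ZMod p) F (a ^ 2) = 0) (ρ : ZMod p) :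
    ∑ y ∈ Finset.univ \ {0}, ∑ z ∈ Finset.univ \ {0},
      ∑ x : F, zetaPow p
        (Algebra.trace (ZMod p) F
            (algebraMap (ZMod p) F y * x ^ 2 + a * algebraMap (ZMod p) F z * x) - z * ρ) =
      0 := by
  classical
  have hp1 : p.Prime := Fact.out
  have hp0 : p ≠ 0 := hp1.ne_zero
  haveI : NeZero p := ⟨hp0⟩
  have hp2 : p ≠ 2 := by rintro rfl; simp [Nat.odd_iff] at hp
  have hprim := Complex.isPrimitiveRoot_exp p hp0
  have hζ : Complex.exp (2 * Real.pi * Complex.I / p) ^ p = 1 := hprim.pow_eq_one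
  set e : AddChar (ZMod p) ℂ := AddChar.zmodChar p hζ with hedef
  have hze : ∀ c : ZMod p, zetaPow p c = e c := fun c => rfl
  have heprim : AddChar.IsPrimitive e := by
    rw [hedef]
    exact AddChar.zmodChar_primitive_of_primitive_root p hprim
  have he1 : ∀ c : ZMod p, e c = 1 ↔ c = 0 :=
    fun c => heprim.zmod_char_eq_one_iff p c
  have hinj : Function.Injective (algebraMap (ZMod p) F) := (algebraMap (ZMod p) F).injective
  haveI : CharP F p := charP_of_injective_algebraMap hinj p
  have hcharF : ringChar F ≠ 2 := by rw [ringChar.eq F p]; exact hp2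
  set ψ : AddChar F ℂ := e.compAddMonoidHom (Algebra.trace (ZMod p) F).toAddMonoidHom with hψdef
  have hψapp : ∀ x : F, ψ x = e (Algebra.trace (ZMod p) F x) := fun x => rfl
  have hψ1 : ψ ≠ 1 := by
    have hex : ∃ x : F, Algebra.trace (ZMod p) F x ≠ 0 := by
      have hchar : ringChar F = p := ringChar.eq F p
      subst hchar
      obtain ⟨b, hb⟩ := FiniteField.trace_to_zmod_nondegenerate F (one_ne_zero (α := F))
      rw [one_mul] at hb
      exact ⟨b, hb⟩
    obtain ⟨x, hx⟩ := hex
    refine AddChar.ne_one_iff.mpr ⟨x, ?_⟩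
    rw [hψapp]
    exact fun h => hx ((he1 _).mp h)
  obtain ⟨n, hn0, hn⟩ := nonsqFAux p m hp hmodd F hcard
  set N : F := algebraMap (ZMod p) F n with hNdef
  -- negation of Gauss-type sums under multiplication by a nonsquare
  have hGneg : ∀ Y : F, Y ≠ 0 → ∑ x : F, ψ (N * Y * x ^ 2) = - ∑ x : F, ψ (Y * x ^ 2) := by
    intro Y hY
    have h := sqSumAux F hcharF ψ hψ1 N hn Y hY
    have h2 : ∑ x : F, ψ (N * Y * x ^ 2) = ∑ x : F, ψ (Y * (N * x ^ 2)) := by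
      apply Finset.sum_congr rfl
      intro x _
      ring_nf
    rw [h2]; linear_combination h
  -- vanishing of the y-sum
  have hS : ∑ y ∈ (univ \ {0} : Finset (ZMod p)),
      ∑ x : F, ψ (algebraMap (ZMod p) F y * x ^ 2) = 0 := by
    set S := ∑ y ∈ (univ \ {0} : Finset (ZMod p)),
      ∑ x : F, ψ (algebraMap (ZMod p) F y * x ^ 2) with hSdef
    have hre : S = ∑ y ∈ (univ \ {0} : Finset (ZMod p)),
        ∑ x : F, ψ (algebraMap (ZMod p) F (n * y) * x ^ 2) := by
      rw [hSdef]
      refine Finset.sum_equiv (Equiv.mulLeft₀ n hn0).symm ?_ ?_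
      · intro y
        simp [sub_eq_empty, hn0, inv_eq_zero]
      · intro y hy
        have : n * ((Equiv.mulLeft₀ n hn0).symm y) = y := by
          simp [mul_inv_cancel_left₀ hn0]
        rw [this]
    have hre2 : ∑ y ∈ (univ \ {0} : Finset (ZMod p)),
        ∑ x : F, ψ (algebraMap (ZMod p) F (n * y) * x ^ 2) = -S := by
      rw [hSdef, ← Finset.sum_neg_distrib]
      refine Finset.sum_congr rfl ?_
      intro y hy
      have hy0 : y ≠ 0 := by
        simp only [Finset.mem_sdiff, Finset.mem_singleton] at hy
        exact hy.2
      have hY : algebraMap (ZMod p) F y ≠ 0 := by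
        simpa using hinj.ne_iff.mpr (show y ≠ 0 from hy0)
      rw [map_mul]
      exact hGneg _ hY
    have : S = -S := hre.trans hre2
    have h2 : (2 : ℂ) * S = 0 := by linear_combination this
    simpa using h2
  -- complete the square in the inner sum
  have h2Z : (2 : F) ≠ 0 := by
    intro h
    have : ((2 : ℕ) : F) = 0 := by norm_cast
    have hdvd : p ∣ 2 := (CharP.cast_eq_zero_iff F p 2).mp this
    exact hp2 ((Nat.prime_dvd_prime_iff_eq hp1 Nat.prime_two).mp hdvd)
  have hinner : ∀ y z : ZMod p, y ≠ 0 →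
      ∑ x : F, e (Algebra.trace (ZMod p) F
          (algebraMap (ZMod p) F y * x ^ 2 + a * algebraMap (ZMod p) F z * x) - z * ρ)
      = (∑ x : F, ψ (algebraMap (ZMod p) F y * x ^ 2)) * e (-(z * ρ)) := by
    intro y z hy
    set Y : F := algebraMap (ZMod p) F y with hYdef
    set Z : F := algebraMap (ZMod p) F z with hZdef
    have hY : Y ≠ 0 := by
      rw [hYdef]; simpa using hinj.ne_iff.mpr (show y ≠ 0 from hy)
    set c : F := a * Z / (2 * Y) with hcdef
    have hsq : ∀ x : F, Y * (x - c) ^ 2 + a * Z * (x - c)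
        = Y * x ^ 2 - ((z ^ 2 / (4 * y)) • (a ^ 2)) := by
      intro x
      have hsm : ((z ^ 2 / (4 * y)) : ZMod p) • (a ^ 2) = (Z ^ 2 / ((4 : F) * Y)) * a ^ 2 := by
        rw [Algebra.smul_def, map_div₀, map_pow, map_mul, map_ofNat]
      rw [hsm, hcdef]
      have h4 : (4 : F) * Y ≠ 0 := by
        have : (4 : F) = 2 * 2 := by norm_num
        rw [this]
        exact mul_ne_zero (mul_ne_zero h2Z h2Z) hY
      have h4F : (4 : F) ≠ 0 := left_ne_zero_of_mul h4
      field_simp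
      ring
    have htr : ∀ x : F, Algebra.trace (ZMod p) F (Y * (x - c) ^ 2 + a * Z * (x - c))
        = Algebra.trace (ZMod p) F (Y * x ^ 2) := by
      intro x
      rw [hsq x, map_sub, LinearMap.map_smul, smul_eq_mul, hTa, mul_zero, sub_zero]
    have hshift : ∑ x : F, e (Algebra.trace (ZMod p) F (Y * x ^ 2 + a * Z * x) - z * ρ)
        = ∑ x : F, e (Algebra.trace (ZMod p) F (Y * x ^ 2) - z * ρ) := by
      refine (Fintype.sum_equiv (Equiv.subRight c)
        (fun x => e (Algebra.trace (ZMod p) F (Y * x ^ 2) - z * ρ))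
        (fun x => e (Algebra.trace (ZMod p) F (Y * x ^ 2 + a * Z * x) - z * ρ)) ?_).symm
      intro x
      show e (Algebra.trace (ZMod p) F (Y * x ^ 2) - z * ρ)
        = e (Algebra.trace (ZMod p) F (Y * (x - c) ^ 2 + a * Z * (x - c)) - z * ρ)
      rw [htr x]
    rw [hshift]
    rw [Finset.sum_mul]
    refine Finset.sum_congr rfl ?_
    intro x _
    rw [sub_eq_add_neg, AddChar.map_add_eq_mul, hψapp]
  -- assembly
  calc ∑ y ∈ Finset.univ \ {0}, ∑ z ∈ Finset.univ \ {0},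
      ∑ x : F, zetaPow p
        (Algebra.trace (ZMod p) F
            (algebraMap (ZMod p) F y * x ^ 2 + a * algebraMap (ZMod p) F z * x) - z * ρ)
      = ∑ y ∈ (univ \ {0} : Finset (ZMod p)),
          (∑ x : F, ψ (algebraMap (ZMod p) F y * x ^ 2)) *
            (∑ z ∈ (univ \ {0} : Finset (ZMod p)), e (-(z * ρ))) := by
        refine Finset.sum_congr rfl ?_
        intro y hy
        have hy0 : y ≠ 0 := by
          simp only [Finset.mem_sdiff, Finset.mem_singleton] at hy
          exact hy.2
        rw [Finset.mul_sum]
        refine Finset.sum_congr rfl ?_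
        intro z hz
        simp only [hze]
        exact hinner y z hy0
    _ = (∑ y ∈ (univ \ {0} : Finset (ZMod p)),
          ∑ x : F, ψ (algebraMap (ZMod p) F y * x ^ 2)) *
            (∑ z ∈ (univ \ {0} : Finset (ZMod p)), e (-(z * ρ))) := by
        rw [Finset.sum_mul]
    _ = 0 := by rw [hS, zero_mul]
end

section
/- Let p be an odd prime, let m ≥ 3 be odd, and let a ∈ F_{p^m}^* satisfy Tr(a²) ≠ 0. Then for ρ = 0, the triple character sum ∑_{y ∈ F_p^*} ∑_{z ∈ F_p^*} ∑_{x ∈ F_{p^m}} ζ_p^{Tr(y x² + a z x) − zρ} equals (−1)^{((m−1)/2)·((p−1)/2)}·(p−1)·p^{(m+1)/2}·η̄(Tr(a²)), where y and z are viewed as elements of F_{p^m} via the embedding of F_p. -/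
open Finset AddChar

section setup
variable (p : ℕ) [Fact p.Prime]

lemma zeta_pow_p : Complex.exp (2 * Real.pi * Complex.I / p) ^ p = 1 :=
  ((Complex.isPrimitiveRoot_exp p (Fact.out : p.Prime).ne_zero).pow_eq_one)

noncomputable def psi1 : AddChar (ZMod p) ℂ := AddChar.zmodChar p (zeta_pow_p p)

lemma zetaPow_eq (c : ZMod p) : zetaPow p c = psi1 p c := rfl

lemma psi1_primitive : (psi1 p).IsPrimitive :=
  AddChar.zmodChar_primitive_of_primitive_root p
    (Complex.isPrimitiveRoot_exp p (Fact.out : p.Prime).ne_zero)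

lemma psi1_eq_one_iff (c : ZMod p) : psi1 p c = 1 ↔ c = 0 :=
  (psi1_primitive p).zmod_char_eq_one_iff p c

variable (F : Type*) [Field F] [Fintype F] [Algebra (ZMod p) F]

noncomputable def psiF : AddChar F ℂ :=
  (psi1 p).compAddMonoidHom (Algebra.trace (ZMod p) F).toAddMonoidHom

lemma psiF_apply (x : F) : psiF p F x = psi1 p (Algebra.trace (ZMod p) F x) := rfl

lemma psiF_primitive (hex : ∃ w : F, Algebra.trace (ZMod p) F w ≠ 0) :
    (psiF p F).IsPrimitive := by
  apply AddChar.IsPrimitive.of_ne_one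
  intro h
  obtain ⟨w, hw⟩ := hex
  have := DFunLike.congr_fun h w
  rw [psiF_apply, AddChar.one_apply] at this
  exact hw ((psi1_eq_one_iff p _).mp this)

end setup

noncomputable def qchar (K : Type*) [Field K] [Fintype K] [DecidableEq K] : MulChar K ℂ :=
  (quadraticChar K).ringHomComp (Int.castRingHom ℂ)

lemma qchar_apply (K : Type*) [Field K] [Fintype K] [DecidableEq K] (a : K) :
    qchar K a = ((quadraticChar K a : ℤ) : ℂ) := rfl

lemma qchar_isQuadratic (K : Type*) [Field K] [Fintype K] [DecidableEq K] :
    (qchar K).IsQuadratic := (quadraticChar_isQuadratic K).comp _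

lemma qchar_mul_self {K : Type*} [Field K] [Fintype K] [DecidableEq K] {b : K} (hb : b ≠ 0) :
    qchar K b * qchar K b = 1 := by
  rw [qchar_apply, ← Complex.ofReal_intCast, ← Complex.ofReal_mul]
  have := quadraticChar_sq_one hb
  rw [pow_two] at this
  rw [← Int.cast_mul, this]
  norm_num

lemma qchar_ne_one (K : Type*) [Field K] [Fintype K] [DecidableEq K] (hK : ringChar K ≠ 2) :
    qchar K ≠ 1 := by
  obtain ⟨a, ha⟩ := quadraticChar_exists_neg_one hK
  have ha0 : a ≠ 0 := by
    intro h; rw [h, quadraticChar_zero] at ha; norm_num at ha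
  intro h
  have h1 : qchar K a = 1 := by rw [h]; exact MulChar.one_apply (IsUnit.mk0 a ha0)
  rw [qchar_apply, ha] at h1
  norm_num at h1

lemma sum_psi_mul_sq {K : Type*} [Field K] [Fintype K] [DecidableEq K] (hK : ringChar K ≠ 2)
    {ψ : AddChar K ℂ} (hψ : ψ.IsPrimitive) {b : K} (hb : b ≠ 0) :
    ∑ x : K, ψ (b * x ^ 2) = qchar K b * gaussSum (qchar K) ψ := by
  have hfib := Finset.sum_fiberwise_of_maps_to' (s := univ) (t := univ)
    (g := fun x : K => x ^ 2) (fun _ _ => mem_univ _) (fun u => ψ (b * u))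
  rw [← hfib]
  have hcard : ∀ u : K, ((univ.filter (fun x : K => x ^ 2 = u)).card : ℂ) = qchar K u + 1 := by
    intro u
    have h := quadraticChar_card_sqrts hK u
    rw [show {x : K | x ^ 2 = u}.toFinset = univ.filter (fun x : K => x ^ 2 = u) by
      ext x; simp] at h
    rw [qchar_apply]
    exact_mod_cast h
  calc ∑ u : K, ∑ _x ∈ univ.filter (fun x : K => x ^ 2 = u), ψ (b * u)
      = ∑ u : K, (qchar K u + 1) * ψ (b * u) := by
        refine Finset.sum_congr rfl fun u _ => ?_
        rw [Finset.sum_const, nsmul_eq_mul, hcard u]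
    _ = ∑ u : K, qchar K u * ψ (b * u) + ∑ u : K, ψ (b * u) := by
        rw [← Finset.sum_add_distrib]
        exact Finset.sum_congr rfl fun u _ => by ring
    _ = gaussSum (qchar K) (ψ.mulShift b) + 0 := by
        have h1 : ∑ u : K, qchar K u * ψ (b * u) = gaussSum (qchar K) (ψ.mulShift b) := rfl
        have h2 : ∑ u : K, ψ (b * u) = 0 := by
          rw [show ∑ u : K, ψ (b * u) = ∑ u : K, ψ (u * b) from
            Finset.sum_congr rfl fun u _ => by rw [mul_comm]]
          rw [AddChar.sum_mulShift b hψ, if_neg hb]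
          norm_num
        rw [h1, h2]
    _ = qchar K b * gaussSum (qchar K) ψ := by
        rw [add_zero]
        have := gaussSum_mulShift (qchar K) ψ (Units.mk0 b hb)
        have h2 := congrArg (fun t => qchar K b * t) this
        rw [← h2, ← mul_assoc]
        norm_num [qchar_mul_self hb]

section transfer
variable (p m : ℕ) [Fact p.Prime] (hp : Odd p) (hmodd : Odd m)
  (F : Type*) [Field F] [Fintype F] [Algebra (ZMod p) F] (hcard : Fintype.card F = p ^ m)

lemma geom_fact : (p - 1) * ∑ i ∈ range m, p ^ i = p ^ m - 1 := by
  have hp1 : 1 ≤ p := (Fact.out : p.Prime).one_lt.le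
  have hpm : 1 ≤ p ^ m := Nat.one_le_pow _ _ (Fact.out : p.Prime).pos
  have h := geom_sum_mul (p : ℤ) m
  have : ((p : ℤ) - 1) * ∑ i ∈ range m, (p : ℤ) ^ i = (p : ℤ) ^ m - 1 := by rw [mul_comm]; exact h
  have := this
  zify [hp1, hpm]
  push_cast at this ⊢
  linarith [this]

include hp hmodd in
lemma s_odd : Odd (∑ i ∈ range m, p ^ i) := by
  have h2 : (∑ i ∈ range m, p ^ i) % 2 = m % 2 := by
    rw [Finset.sum_nat_mod]
    have : ∀ i ∈ range m, p ^ i % 2 = 1 := fun i _ => Nat.odd_iff.mp (hp.pow)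
    rw [Finset.sum_congr rfl this]
    simp [Finset.sum_const, Finset.card_range]
  rw [Nat.odd_iff, h2, ← Nat.odd_iff]
  exact hmodd

include hp hmodd hcard in
lemma isSquare_transfer {y : ZMod p} (hy : y ≠ 0) :
    IsSquare (algebraMap (ZMod p) F y) ↔ IsSquare y := by
  have hpp : p.Prime := Fact.out
  haveI : CharP F p := charP_of_injective_algebraMap (algebraMap (ZMod p) F).injective p
  have hrc : ringChar F = p := ringChar.eq F p
  have hp2 : p ≠ 2 := fun h => by rw [h] at hp; exact (Nat.not_odd_iff_even.mpr even_two) hp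
  have hrc2 : ringChar F ≠ 2 := hrc ▸ hp2
  have hrcZ : ringChar (ZMod p) ≠ 2 := by rw [ZMod.ringChar_zmod_n]; exact hp2
  have hy' : algebraMap (ZMod p) F y ≠ 0 := fun h => hy ((algebraMap (ZMod p) F).injective
    (by rw [h, map_zero]))
  set s := ∑ i ∈ range m, p ^ i with hs
  have hodd_s := s_odd p m hp hmodd
  -- card F / 2 = (p / 2) * s
  have hdiv : Fintype.card F / 2 = (p / 2) * s := by
    rw [hcard]
    have h1 : (p - 1) * s = p ^ m - 1 := geom_fact p m
    have hps : Odd (p ^ m) := hp.pow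
    obtain ⟨t, ht⟩ := hps
    obtain ⟨r, hr⟩ := hp
    have h2 : p - 1 = 2 * r := by omega
    have h3 : p ^ m - 1 = 2 * t := by omega
    rw [h2, h3] at h1
    have h1' : 2 * (r * s) = 2 * t := by rw [← h1]; ring
    have hrs : r * s = t := by omega
    have h4 : p / 2 = r := by omega
    rw [ht, h4, ← hrs]
    omega
  have key : (algebraMap (ZMod p) F y) ^ (Fintype.card F / 2)
      = algebraMap (ZMod p) F ((y ^ (p / 2)) ^ s) := by
    rw [hdiv, map_pow, map_pow, pow_mul]
  have hsq : y ^ (p / 2) = 1 ∨ y ^ (p / 2) = -1 := by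
    have h1 : (y ^ (p / 2)) * (y ^ (p / 2)) = 1 := by
      rw [← pow_add]
      have : p / 2 + p / 2 = p - 1 := by
        obtain ⟨r, hr⟩ := hp; omega
      rw [this, ZMod.pow_card_sub_one_eq_one hy]
    exact mul_self_eq_one_iff.mp h1
  have hZiff : IsSquare y ↔ y ^ (p / 2) = 1 := by
    have := FiniteField.isSquare_iff hrcZ hy
    rwa [ZMod.card] at this
  have hFiff : IsSquare (algebraMap (ZMod p) F y)
      ↔ (algebraMap (ZMod p) F y) ^ (Fintype.card F / 2) = 1 :=
    FiniteField.isSquare_iff hrc2 hy'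
  rcases hsq with h1 | h1
  · simp only [hZiff, hFiff, key, h1, one_pow, _root_.map_one]
  · have hneg : ((y ^ (p / 2)) ^ s) = -1 := by rw [h1, hodd_s.neg_one_pow]
    rw [hFiff, key, hneg, hZiff, h1, map_neg, _root_.map_one]
    constructor
    · intro h
      exfalso
      have h4 : (2 : F) = 0 := by linear_combination -h
      have h5 : (p : ℕ) ∣ 2 := (CharP.cast_eq_zero_iff F p 2).mp (by exact_mod_cast h4)
      have h6 := Nat.le_of_dvd (by norm_num) h5
      have h7 := hpp.two_le
      omega
    · intro h
      exfalso
      have h4 : (2 : ZMod p) = 0 := by linear_combination -h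
      have h5 : (p : ℕ) ∣ 2 := (CharP.cast_eq_zero_iff (ZMod p) p 2).mp (by exact_mod_cast h4)
      have h6 := Nat.le_of_dvd (by norm_num) h5
      have h7 := hpp.two_le
      omega

include hp hmodd hcard in
lemma qchar_transfer [DecidableEq F] {y : ZMod p} (hy : y ≠ 0) :
    quadraticChar F (algebraMap (ZMod p) F y) = quadraticChar (ZMod p) y := by
  have hpp : p.Prime := Fact.out
  haveI : CharP F p := charP_of_injective_algebraMap (algebraMap (ZMod p) F).injective p
  have hy' : algebraMap (ZMod p) F y ≠ 0 := fun h => hy ((algebraMap (ZMod p) F).injective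
    (by rw [h, map_zero]))
  by_cases h : IsSquare y
  · rw [(quadraticChar_one_iff_isSquare hy').mpr
      ((isSquare_transfer p m hp hmodd F hcard hy).mpr h),
      (quadraticChar_one_iff_isSquare hy).mpr h]
  · rw [quadraticChar_neg_one_iff_not_isSquare.mpr
      (fun hc => h ((isSquare_transfer p m hp hmodd F hcard hy).mp hc)),
      quadraticChar_neg_one_iff_not_isSquare.mpr h]

end transfer

lemma AddChar.map_sum' {A : Type*} [AddCommMonoid A] (ψ : AddChar A ℂ) {ι : Type*} (s : Finset ι)
    (f : ι → A) : ψ (∑ i ∈ s, f i) = ∏ i ∈ s, ψ (f i) := by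
  classical
  induction s using Finset.induction with
  | empty => simp
  | insert _ _ h ih => rw [Finset.sum_insert h, Finset.prod_insert h, AddChar.map_add_eq_mul, ih]

section dh
variable (p m : ℕ) [Fact p.Prime] (hp : Odd p) (hmodd : Odd m)
  (F : Type*) [Field F] [Fintype F] [Algebra (ZMod p) F]
  (hcard : Fintype.card F = p ^ m)

include hp hmodd hcard in
lemma trace_sum_sq :
    ∑ x : F, psiF p F (x ^ 2) = gaussSum (qchar (ZMod p)) (psi1 p) ^ m := by
  classical
  have hpp : p.Prime := Fact.out
  haveI : CharP F p := charP_of_injective_algebraMap (algebraMap (ZMod p) F).injective p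
  have hp2 : p ≠ 2 := fun h => by rw [h] at hp; exact (Nat.not_odd_iff_even.mpr even_two) hp
  have hrcZ : ringChar (ZMod p) ≠ 2 := by rw [ZMod.ringChar_zmod_n]; exact hp2
  have h2Z : (2 : ZMod p) ≠ 0 := by
    intro h
    have h5 : (p : ℕ) ∣ 2 := (CharP.cast_eq_zero_iff (ZMod p) p 2).mp (by exact_mod_cast h)
    have h6 := Nat.le_of_dvd (by norm_num) h5
    have h7 := hpp.two_le
    omega
  haveI : Invertible (2 : ZMod p) := invertibleOfNonzero h2Z
  set n := Module.finrank (ZMod p) F with hn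
  have hnm : n = m := by
    have h := Module.card_eq_pow_finrank (K := ZMod p) (V := F)
    rw [ZMod.card, hcard] at h
    exact Nat.pow_right_injective hpp.two_le h.symm
  obtain ⟨v, hv⟩ := LinearMap.BilinForm.exists_orthogonal_basis
    (LinearMap.BilinForm.isSymm_iff.mp (Algebra.traceForm_isSymm (ZMod p) (S := F)))
  set B := Algebra.traceForm (ZMod p) F with hBdef
  set d : Fin n → ZMod p := fun i => Algebra.trace (ZMod p) F (v i * v i) with hd_def
  have hBv : ∀ i j, B (v i) (v j) = Algebra.trace (ZMod p) F (v i * v j) := fun i j =>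
    Algebra.traceForm_apply (ZMod p) (v i) (v j)
  -- each diagonal entry is nonzero
  have hd : ∀ i, d i ≠ 0 := by
    intro i hdi
    have hnd := traceForm_nondegenerate (ZMod p) F
    have hvz : v i = 0 := by
      apply hnd.1 (v i)
      intro y
      have hy : y = ∑ j, v.repr y j • v j := (v.sum_repr y).symm
      rw [hy, map_sum]
      refine Finset.sum_eq_zero fun j _ => ?_
      rw [map_smul, smul_eq_mul]
      by_cases hij : j = i
      · subst hij
        rw [show B (v j) (v j) = d j from hBv j j, hdi, mul_zero]
      · rw [hv (Ne.symm hij), mul_zero]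
    exact v.ne_zero i hvz
  -- expand the sum over coordinates
  have hstep1 : ∑ x : F, psiF p F (x ^ 2)
      = ∑ c : Fin n → ZMod p, psi1 p (∑ i, d i * c i ^ 2) := by
    rw [← Equiv.sum_comp v.equivFun.toEquiv.symm (fun x : F => psiF p F (x ^ 2))]
    refine Finset.sum_congr rfl fun c _ => ?_
    have hx : (v.equivFun.toEquiv.symm c : F) = ∑ i, c i • v i := by
      simp [Module.Basis.equivFun_symm_apply]
    rw [hx, psiF_apply]
    congr 1
    rw [sq]
    have hT : Algebra.trace (ZMod p) F ((∑ i, c i • v i) * ∑ j, c j • v j)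
        = B (∑ i, c i • v i) (∑ j, c j • v j) :=
      (Algebra.traceForm_apply (ZMod p) _ _).symm
    rw [hT, map_sum]
    refine Finset.sum_congr rfl fun j _ => ?_
    rw [map_smul, smul_eq_mul]
    have hinner : B (∑ i, c i • v i) (v j) = c j * d j := by
      rw [map_sum, LinearMap.sum_apply]
      rw [Finset.sum_eq_single j]
      · rw [map_smul, LinearMap.smul_apply, smul_eq_mul,
          show B (v j) (v j) = d j from hBv j j]
      · intro i _ hij
        rw [map_smul, LinearMap.smul_apply, smul_eq_mul, hv hij, mul_zero]
      · intro h; exact absurd (mem_univ j) h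
    rw [hinner]
    ring
  rw [hstep1]
  have hstep2 : ∑ c : Fin n → ZMod p, psi1 p (∑ i, d i * c i ^ 2)
      = ∏ i : Fin n, ∑ t : ZMod p, psi1 p (d i * t ^ 2) := by
    rw [Finset.prod_univ_sum]
    rw [Fintype.piFinset_univ]
    exact Finset.sum_congr rfl fun c _ =>
      AddChar.map_sum' (psi1 p) univ (fun i => d i * c i ^ 2)
  rw [hstep2]
  have hstep3 : ∀ i, ∑ t : ZMod p, psi1 p (d i * t ^ 2)
      = qchar (ZMod p) (d i) * gaussSum (qchar (ZMod p)) (psi1 p) := fun i =>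
    sum_psi_mul_sq hrcZ (psi1_primitive p) (hd i)
  rw [Finset.prod_congr rfl fun i _ => hstep3 i, Finset.prod_mul_distrib,
    Finset.prod_const, ← map_prod, Finset.card_univ, Fintype.card_fin]
  -- the discriminant is a square
  have hsq : IsSquare (∏ i, d i) := by
    haveI : IsGalois (ZMod p) F := inferInstance
    have hcardaut : Fintype.card (F ≃ₐ[ZMod p] F) = n := by
      rw [← Nat.card_eq_fintype_card]; exact IsGalois.card_aut_eq_finrank _ _
    let e2 : (F ≃ₐ[ZMod p] F) ≃ Fin n := Fintype.equivFinOfCardEq hcardaut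
    let M : Matrix (Fin n) (Fin n) F := Matrix.of fun k i => e2.symm k (v i)
    have hMM : M.transpose * M = Matrix.diagonal (fun i => algebraMap (ZMod p) F (d i)) := by
      ext i j
      rw [Matrix.mul_apply]
      have h1 : ∀ k, M.transpose i k * M k j = e2.symm k (v i * v j) := by
        intro k; rw [Matrix.transpose_apply]; simp only [M, Matrix.of_apply, ← map_mul]
      rw [Finset.sum_congr rfl fun k _ => h1 k,
        Equiv.sum_comp e2.symm (fun σ : F ≃ₐ[ZMod p] F => σ (v i * v j)),
        ← trace_eq_sum_automorphisms]
      by_cases hij : i = j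
      · subst hij; rw [Matrix.diagonal_apply_eq]
      · rw [Matrix.diagonal_apply_ne _ hij]
        have : Algebra.trace (ZMod p) F (v i * v j) = 0 := by
          rw [← hBv i j]; exact hv hij
        rw [this, map_zero]
    have hdet : M.det * M.det = algebraMap (ZMod p) F (∏ i, d i) := by
      have h := congrArg Matrix.det hMM
      rw [Matrix.det_mul, Matrix.det_transpose, Matrix.det_diagonal, ← map_prod] at h
      exact h
    have hFsq : IsSquare (algebraMap (ZMod p) F (∏ i, d i)) := ⟨M.det, hdet.symm⟩
    have hdnz : (∏ i, d i) ≠ 0 := Finset.prod_ne_zero_iff.mpr fun i _ => hd i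
    exact (isSquare_transfer p m hp hmodd F hcard hdnz).mp hFsq
  have hq1 : qchar (ZMod p) (∏ i, d i) = 1 := by
    have hdnz : (∏ i, d i) ≠ 0 := Finset.prod_ne_zero_iff.mpr fun i _ => hd i
    rw [qchar_apply, (quadraticChar_one_iff_isSquare hdnz).mpr hsq]
    norm_num
  rw [hq1, one_mul, hnm]

include hp hmodd hcard in
lemma gaussSum_F_eq (hex : ∃ w : F, Algebra.trace (ZMod p) F w ≠ 0) [DecidableEq F] :
    gaussSum (qchar F) (psiF p F) = gaussSum (qchar (ZMod p)) (psi1 p) ^ m := by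
  have hpp : p.Prime := Fact.out
  haveI : CharP F p := charP_of_injective_algebraMap (algebraMap (ZMod p) F).injective p
  have hp2 : p ≠ 2 := fun h => by rw [h] at hp; exact (Nat.not_odd_iff_even.mpr even_two) hp
  have hrc2 : ringChar F ≠ 2 := by rw [ringChar.eq F p]; exact hp2
  have h := sum_psi_mul_sq hrc2 (psiF_primitive p F hex) (b := (1 : F)) one_ne_zero
  rw [map_one, one_mul] at h
  rw [← h]
  rw [show (∑ x : F, psiF p F (1 * x ^ 2)) = ∑ x : F, psiF p F (x ^ 2) from
    Finset.sum_congr rfl fun x _ => by rw [one_mul]]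
  exact trace_sum_sq p m hp hmodd F hcard

end dh

section inner
variable (p m : ℕ) [Fact p.Prime] (hp : Odd p) (hmodd : Odd m)
  (F : Type*) [Field F] [Fintype F] [DecidableEq F] [Algebra (ZMod p) F]
  (hcard : Fintype.card F = p ^ m)

include hp hmodd hcard in
lemma inner_sum_eval (a : F) (ha : a ≠ 0) (hex : ∃ w : F, Algebra.trace (ZMod p) F w ≠ 0)
    {y z : ZMod p} (hy : y ≠ 0) (hz : z ≠ 0) :
    ∑ x : F, psiF p F (algebraMap (ZMod p) F y * x ^ 2 + a * algebraMap (ZMod p) F z * x)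
      = psi1 p ((-(4 * y)⁻¹ * Algebra.trace (ZMod p) F (a ^ 2)) * z ^ 2) *
        (((quadraticChar (ZMod p) y : ℤ) : ℂ) * gaussSum (qchar F) (psiF p F)) := by
  classical
  have hpp : p.Prime := Fact.out
  haveI : CharP F p := charP_of_injective_algebraMap (algebraMap (ZMod p) F).injective p
  have hp2 : p ≠ 2 := fun h => by rw [h] at hp; exact (Nat.not_odd_iff_even.mpr even_two) hp
  have hrc2 : ringChar F ≠ 2 := by rw [ringChar.eq F p]; exact hp2
  have h2F : (2 : F) ≠ 0 := by
    intro h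
    have h5 : (p : ℕ) ∣ 2 := (CharP.cast_eq_zero_iff F p 2).mp (by exact_mod_cast h)
    have h6 := Nat.le_of_dvd (by norm_num) h5
    have h7 := hpp.two_le
    omega
  have h4F : (4 : F) ≠ 0 := by
    intro h
    have : (2 : F) * 2 = 0 := by rw [← h]; norm_num
    exact h2F (by rcases mul_eq_zero.mp this with h | h <;> exact h)
  set w := algebraMap (ZMod p) F y with hwdef
  set zz := algebraMap (ZMod p) F z with hzzdef
  have hw : w ≠ 0 := by rw [hwdef]; simpa only [ne_eq, map_eq_zero] using hy
  have hzz : zz ≠ 0 := by rw [hzzdef]; simpa only [ne_eq, map_eq_zero] using hz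
  set b := a * zz * (2 * w)⁻¹ with hbdef
  set cst := -(a ^ 2 * zz ^ 2 * (4 * w)⁻¹) with hcstdef
  have key : ∀ x : F, w * x ^ 2 + a * zz * x = w * (x + b) ^ 2 + cst := by
    intro x
    rw [hbdef, hcstdef]
    field_simp
    ring
  rw [Finset.sum_congr rfl fun x _ => by rw [key x]]
  have hre : ∑ x : F, psiF p F (w * (x + b) ^ 2 + cst)
      = ∑ x : F, psiF p F (w * x ^ 2 + cst) :=
    Equiv.sum_comp (Equiv.addRight b) (fun x : F => psiF p F (w * x ^ 2 + cst))
  rw [hre]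
  have hsplit : ∀ x : F, psiF p F (w * x ^ 2 + cst) = psiF p F cst * psiF p F (w * x ^ 2) := by
    intro x; rw [AddChar.map_add_eq_mul, mul_comm]
  rw [Finset.sum_congr rfl fun x _ => hsplit x, ← Finset.mul_sum]
  have hgauss : ∑ x : F, psiF p F (w * x ^ 2) = qchar F w * gaussSum (qchar F) (psiF p F) :=
    sum_psi_mul_sq hrc2 (psiF_primitive p F hex) hw
  rw [hgauss]
  have hqw : qchar F w = ((quadraticChar (ZMod p) y : ℤ) : ℂ) := by
    rw [qchar_apply, qchar_transfer p m hp hmodd F hcard hy]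
  rw [hqw]
  have hcst : psiF p F cst = psi1 p ((-(4 * y)⁻¹ * Algebra.trace (ZMod p) F (a ^ 2)) * z ^ 2) := by
    have hcst2 : cst = (-(4 * y)⁻¹ * z ^ 2) • (a ^ 2) := by
      rw [hcstdef, Algebra.smul_def, map_mul, map_neg, map_inv₀, map_mul, map_pow]
      rw [show ((algebraMap (ZMod p) F) (4 : ZMod p)) = (4 : F) from map_ofNat _ 4]
      rw [← hwdef, ← hzzdef]
      field_simp
    rw [psiF_apply, hcst2, LinearMap.map_smul, smul_eq_mul]
    congr 1
    ring
  rw [hcst]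

end inner

section final
variable (p : ℕ) [Fact p.Prime]

lemma p_ne_two (hp : Odd p) : p ≠ 2 := fun h => by
  rw [h] at hp; exact (Nat.not_odd_iff_even.mpr even_two) hp

lemma hrcZp : ringChar (ZMod p) = p := by rw [ZMod.ringChar_zmod_n]

lemma two_ne_zero_zmod (hp : Odd p) : (2 : ZMod p) ≠ 0 := by
  intro h
  have hpp : p.Prime := Fact.out
  have h5 : (p : ℕ) ∣ 2 := (CharP.cast_eq_zero_iff (ZMod p) p 2).mp (by exact_mod_cast h)
  have h6 := Nat.le_of_dvd (by norm_num) h5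
  have h7 := hpp.two_le
  have := p_ne_two p hp
  omega

lemma four_ne_zero_zmod (hp : Odd p) : (4 : ZMod p) ≠ 0 := by
  intro h
  have : (2 : ZMod p) * 2 = 0 := by rw [show (2 : ZMod p) * 2 = 4 by norm_num, h]
  rcases mul_eq_zero.mp this with h | h <;> exact two_ne_zero_zmod p hp h

/-- the z-sum -/
lemma z_sum (hp : Odd p) {u : ZMod p} (hu : u ≠ 0) :
    ∑ z ∈ Finset.univ \ {0}, psi1 p (u * z ^ 2)
      = qchar (ZMod p) u * gaussSum (qchar (ZMod p)) (psi1 p) - 1 := by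
  have hrc : ringChar (ZMod p) ≠ 2 := by rw [hrcZp]; exact p_ne_two p hp
  rw [Finset.sum_sdiff_eq_sub (Finset.subset_univ _), Finset.sum_singleton]
  rw [sum_psi_mul_sq hrc (psi1_primitive p) hu]
  norm_num

/-- χ(-1) as a power of -1 -/
lemma qchar_neg_one_eq (hp : Odd p) :
    qchar (ZMod p) (-1) = (-1 : ℂ) ^ ((p - 1) / 2) := by
  have hrc : ringChar (ZMod p) ≠ 2 := by rw [hrcZp]; exact p_ne_two p hp
  have h := quadraticChar_neg_one hrc
  rw [ZMod.card] at h
  rw [qchar_apply, h, ZMod.χ₄_nat_eq_if_mod_four]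
  obtain ⟨r, hr⟩ := hp
  have hp2 : p % 2 = 1 := by omega
  rw [if_neg (by omega)]
  have hr2 : (p - 1) / 2 = r := by omega
  rw [hr2]
  rcases Nat.even_or_odd r with he | ho
  · rw [if_pos (by obtain ⟨t, ht⟩ := he; omega), he.neg_one_pow]
    norm_num
  · rw [if_neg (by obtain ⟨t, ht⟩ := ho; omega), ho.neg_one_pow]
    norm_num

end final

theorem stmt_7 (p m : ℕ) [Fact p.Prime] (hp : Odd p) (hm : 3 ≤ m) (hmodd : Odd m)
    (F : Type*) [Field F] [Fintype F] [Algebra (ZMod p) F]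
    (hcard : Fintype.card F = p ^ m)
    (a : F) (ha : a ≠ 0) (hTa : Algebra.trace (ZMod p) F (a ^ 2) ≠ 0)
    (ρ : ZMod p) (hρ : ρ = 0) :
    ∑ y ∈ Finset.univ \ {0}, ∑ z ∈ Finset.univ \ {0},
      ∑ x : F, zetaPow p
        (Algebra.trace (ZMod p) F
            (algebraMap (ZMod p) F y * x ^ 2 + a * algebraMap (ZMod p) F z * x) - z * ρ) =
      (-1 : ℂ) ^ ((m - 1) / 2 * ((p - 1) / 2)) * ((p : ℂ) - 1) * (p : ℂ) ^ ((m + 1) / 2) *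
        ((quadraticChar (ZMod p) (Algebra.trace (ZMod p) F (a ^ 2)) : ℤ) : ℂ) := by
  classical
  subst hρ
  have hpp : p.Prime := Fact.out
  have hp2 := p_ne_two p hp
  have hrcZ : ringChar (ZMod p) ≠ 2 := by rw [hrcZp]; exact hp2
  have h2Z := two_ne_zero_zmod p hp
  have h4Z := four_ne_zero_zmod p hp
  have hex : ∃ w : F, Algebra.trace (ZMod p) F w ≠ 0 := ⟨a ^ 2, hTa⟩
  set τ := Algebra.trace (ZMod p) F (a ^ 2) with hτdef
  set g := gaussSum (qchar (ZMod p)) (psi1 p) with hgdef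
  set GF := gaussSum (qchar F) (psiF p F) with hGFdef
  -- nonvanishing of the z-sum coefficient
  have huy : ∀ y : ZMod p, y ≠ 0 → (-(4 * y)⁻¹ * τ) ≠ 0 := fun y hy =>
    mul_ne_zero (neg_ne_zero.mpr (inv_ne_zero (mul_ne_zero h4Z hy))) hTa
  -- the character product identity
  have hqq : ∀ y : ZMod p, y ≠ 0 →
      qchar (ZMod p) (-(4 * y)⁻¹ * τ) * qchar (ZMod p) y
        = qchar (ZMod p) (-1) * qchar (ZMod p) τ := by
    intro y hy
    rw [← map_mul]
    have hval : (-(4 * y)⁻¹ * τ) * y = (-1) * τ * (2⁻¹ * 2⁻¹) := by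
      have h4 : (4 : ZMod p) = 2 * 2 := by norm_num
      field_simp
      ring
    rw [hval, map_mul, map_mul, map_mul, qchar_mul_self (inv_ne_zero h2Z), mul_one]
  -- evaluation of the double inner sum for each y ≠ 0
  have hyz : ∀ y ∈ (Finset.univ \ {(0 : ZMod p)}),
      (∑ z ∈ Finset.univ \ {(0 : ZMod p)}, ∑ x : F, zetaPow p
        (Algebra.trace (ZMod p) F
            (algebraMap (ZMod p) F y * x ^ 2 + a * algebraMap (ZMod p) F z * x) - z * 0))
      = (qchar (ZMod p) (-1) * qchar (ZMod p) τ * g - qchar (ZMod p) y) * GF := by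
    intro y hy'
    have hy : y ≠ 0 := by
      rcases Finset.mem_sdiff.mp hy' with ⟨_, h2⟩
      simpa using h2
    calc (∑ z ∈ Finset.univ \ {(0 : ZMod p)}, ∑ x : F, zetaPow p
        (Algebra.trace (ZMod p) F
            (algebraMap (ZMod p) F y * x ^ 2 + a * algebraMap (ZMod p) F z * x) - z * 0))
        = ∑ z ∈ Finset.univ \ {(0 : ZMod p)},
            psi1 p ((-(4 * y)⁻¹ * τ) * z ^ 2) * (((quadraticChar (ZMod p) y : ℤ) : ℂ) * GF) := by
          refine Finset.sum_congr rfl fun z hz' => ?_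
          have hz : z ≠ 0 := by
            rcases Finset.mem_sdiff.mp hz' with ⟨_, h2⟩
            simpa using h2
          rw [show (∑ x : F, zetaPow p
            (Algebra.trace (ZMod p) F
              (algebraMap (ZMod p) F y * x ^ 2 + a * algebraMap (ZMod p) F z * x) - z * 0))
            = ∑ x : F, psiF p F
              (algebraMap (ZMod p) F y * x ^ 2 + a * algebraMap (ZMod p) F z * x) from
            Finset.sum_congr rfl fun x _ => by
              rw [mul_zero, sub_zero]; rfl]
          exact inner_sum_eval p m hp hmodd F hcard a ha hex hy hz
      _ = (∑ z ∈ Finset.univ \ {(0 : ZMod p)}, psi1 p ((-(4 * y)⁻¹ * τ) * z ^ 2))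
            * (((quadraticChar (ZMod p) y : ℤ) : ℂ) * GF) := by
          rw [← Finset.sum_mul]
      _ = (qchar (ZMod p) (-(4 * y)⁻¹ * τ) * g - 1) * (qchar (ZMod p) y * GF) := by
          rw [z_sum p hp (huy y hy)]
          rfl
      _ = ((qchar (ZMod p) (-(4 * y)⁻¹ * τ) * qchar (ZMod p) y) * g - qchar (ZMod p) y) * GF := by
          ring
      _ = (qchar (ZMod p) (-1) * qchar (ZMod p) τ * g - qchar (ZMod p) y) * GF := by
          rw [hqq y hy]
  rw [Finset.sum_congr rfl hyz]
  -- sum over y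
  have hchi0 : qchar (ZMod p) (0 : ZMod p) = 0 := by
    rw [qchar_apply, quadraticChar_zero]; norm_num
  have hsum_chi : ∑ y ∈ Finset.univ \ {(0 : ZMod p)}, qchar (ZMod p) y = 0 := by
    rw [Finset.sum_sdiff_eq_sub (Finset.subset_univ _), Finset.sum_singleton, hchi0, sub_zero]
    have h := quadraticChar_sum_zero hrcZ
    calc ∑ y : ZMod p, qchar (ZMod p) y
        = ((∑ y : ZMod p, quadraticChar (ZMod p) y : ℤ) : ℂ) := by
          rw [Int.cast_sum]
          rfl
      _ = 0 := by rw [h]; norm_num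
  have hcard0 : (Finset.univ \ {(0 : ZMod p)}).card = p - 1 := by
    rw [Finset.card_sdiff_of_subset (Finset.subset_univ _), Finset.card_singleton, Finset.card_univ,
      ZMod.card]
  rw [show (∑ y ∈ Finset.univ \ {(0 : ZMod p)},
      (qchar (ZMod p) (-1) * qchar (ZMod p) τ * g - qchar (ZMod p) y) * GF)
      = ((Finset.univ \ {(0 : ZMod p)}).card * (qchar (ZMod p) (-1) * qchar (ZMod p) τ * g)
          - ∑ y ∈ Finset.univ \ {(0 : ZMod p)}, qchar (ZMod p) y) * GF from by
    rw [← Finset.sum_mul, Finset.sum_sub_distrib, Finset.sum_const, nsmul_eq_mul]]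
  rw [hsum_chi, sub_zero, hcard0]
  -- Davenport-Hasse
  have hGF : GF = g ^ m := gaussSum_F_eq p m hp hmodd F hcard hex
  rw [hGF]
  -- Gauss sum square
  have hg2 : g ^ 2 = qchar (ZMod p) (-1) * p := by
    have := gaussSum_sq (qchar_ne_one (ZMod p) hrcZ) (qchar_isQuadratic (ZMod p))
      (psi1_primitive p)
    rwa [ZMod.card] at this
  set r := (p - 1) / 2 with hrdef
  have hqneg : qchar (ZMod p) (-1) = (-1 : ℂ) ^ r := qchar_neg_one_eq p hp
  obtain ⟨k, hk⟩ := hmodd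
  have hm1 : (m - 1) / 2 = k := by omega
  have hm2 : (m + 1) / 2 = k + 1 := by omega
  have hgm : g * g ^ m = ((-1 : ℂ) ^ r * (p : ℂ)) ^ (k + 1) := by
    rw [hk, ← pow_succ']
    rw [show 2 * k + 1 + 1 = 2 * (k + 1) by ring, pow_mul, hg2, hqneg]
  have hcastp : ((p - 1 : ℕ) : ℂ) = (p : ℂ) - 1 := by
    have : 1 ≤ p := hpp.one_lt.le
    push_cast [Nat.cast_sub this]
    ring
  have hsign : ((-1 : ℂ) ^ r) ^ (k + 1) * (-1 : ℂ) ^ r = (-1 : ℂ) ^ (k * r) := by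
    rw [← pow_mul, ← pow_add, show r * (k + 1) + r = k * r + 2 * r by ring, pow_add,
      pow_mul, pow_mul, neg_one_sq, one_pow, mul_one]
  calc ((p - 1 : ℕ) : ℂ) * (qchar (ZMod p) (-1) * qchar (ZMod p) τ * g) * g ^ m
      = ((p - 1 : ℕ) : ℂ) * ((-1 : ℂ) ^ r * qchar (ZMod p) τ) * (g * g ^ m) := by
        rw [hqneg]; ring
    _ = ((p : ℂ) - 1) * ((-1 : ℂ) ^ r * qchar (ZMod p) τ)
          * (((-1 : ℂ) ^ r) ^ (k + 1) * (p : ℂ) ^ (k + 1)) := by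
        rw [hgm, hcastp, mul_pow]
    _ = (((-1 : ℂ) ^ r) ^ (k + 1) * (-1 : ℂ) ^ r) * ((p : ℂ) - 1) * (p : ℂ) ^ (k + 1)
          * qchar (ZMod p) τ := by ring
    _ = (-1 : ℂ) ^ (k * r) * ((p : ℂ) - 1) * (p : ℂ) ^ (k + 1) * qchar (ZMod p) τ := by
        rw [hsign]
    _ = (-1 : ℂ) ^ ((m - 1) / 2 * ((p - 1) / 2)) * ((p : ℂ) - 1) * (p : ℂ) ^ ((m + 1) / 2) *
        ((quadraticChar (ZMod p) τ : ℤ) : ℂ) := by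
        rw [hm1, hm2, hrdef]
        rfl
end

section
/- Let p be an odd prime, let m ≥ 3 be odd, let a ∈ F_{p^m}^* satisfy Tr(a²) = 0, and let ρ ∈ F_p be arbitrary. Then the number of x ∈ F_{p^m} with Tr(x²) = 0 and Tr(ax) = ρ equals p^{m−2}. -/
open Finset

section Aux

variable {p : ℕ} [Fact p.Prime] {F : Type*} [Field F] [Fintype F] [Algebra (ZMod p) F]

/-- Every fiber of a nonzero `ZMod p`-linear functional on `F` has `card F / p` elements. -/
lemma aux_fiber_card [DecidableEq F] (φ : F →ₗ[ZMod p] ZMod p) (hφ : φ ≠ 0) (r : ZMod p) :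
    (univ.filter fun x : F => φ x = r).card * p = Fintype.card F := by
  obtain ⟨x₀, hx₀⟩ : ∃ x₀ : F, φ x₀ ≠ 0 := by
    by_contra h
    push_neg at h
    exact hφ (LinearMap.ext fun x => h x)
  have key : ∀ r₁ r₂ : ZMod p,
      (univ.filter fun x : F => φ x = r₁).card = (univ.filter fun x : F => φ x = r₂).card := by
    intro r₁ r₂
    apply Finset.card_nbij' (fun x => x + ((r₂ - r₁) / φ x₀) • x₀)
      (fun x => x - ((r₂ - r₁) / φ x₀) • x₀)
    · intro x hx
      simp only [Finset.mem_coe, mem_filter, mem_univ, true_and] at hx ⊢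
      rw [map_add, map_smul, smul_eq_mul, div_mul_cancel₀ _ hx₀, hx]
      ring
    · intro x hx
      simp only [Finset.mem_coe, mem_filter, mem_univ, true_and] at hx ⊢
      rw [map_sub, map_smul, smul_eq_mul, div_mul_cancel₀ _ hx₀, hx]
      ring
    · intro x _; ring
    · intro x _; ring
  have total : Fintype.card F = ∑ r' : ZMod p, (univ.filter fun x : F => φ x = r').card := by
    rw [← Finset.card_univ]
    exact Finset.card_eq_sum_card_fiberwise fun x _ => mem_univ _
  calc (univ.filter fun x : F => φ x = r).card * p
      = ∑ _r' : ZMod p, (univ.filter fun x : F => φ x = r).card := by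
        rw [Finset.sum_const, card_univ, ZMod.card, smul_eq_mul, mul_comm]
    _ = ∑ r' : ZMod p, (univ.filter fun x : F => φ x = r').card :=
        Finset.sum_congr rfl fun r' _ => key r r'
    _ = Fintype.card F := total.symm

/-- A nonsquare of `ZMod p` stays a nonsquare in an odd-degree extension. -/
lemma aux_nonsquare {m : ℕ} (hmodd : Odd m) (hcard : Fintype.card F = p ^ m)
    {c₀ : ZMod p} (hc₀ : ¬ IsSquare c₀) : ¬ IsSquare (algebraMap (ZMod p) F c₀) := by
  haveI : FiniteDimensional (ZMod p) F := Module.Finite.of_finite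
  have hfr : Module.finrank (ZMod p) F = m := by
    have h := Module.card_eq_pow_finrank (K := ZMod p) (V := F)
    rw [ZMod.card, hcard] at h
    exact Nat.pow_right_injective (Fact.out (p := p.Prime)).two_le h.symm
  rintro ⟨b, hb⟩
  have hc0ne : c₀ ≠ 0 := fun h => hc₀ (h ▸ ⟨0, by simp⟩)
  have hnorm : c₀ ^ m = Algebra.norm (ZMod p) b * Algebra.norm (ZMod p) b := by
    rw [← map_mul, ← hb, Algebra.norm_algebraMap, hfr]
  obtain ⟨r, hr⟩ := hmodd
  apply hc₀
  refine ⟨Algebra.norm (ZMod p) b / c₀ ^ r, ?_⟩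
  have hpr : (c₀ : ZMod p) ^ r ≠ 0 := pow_ne_zero _ hc0ne
  field_simp
  rw [sq (Algebra.norm (ZMod p) b), ← hnorm, hr]
  ring

/-- The number of `x` with `Tr (x^2) = 0` is `p^(m-1)`. -/
lemma aux_quadric_card [DecidableEq F] (hp : Odd p) {m : ℕ} (hm : 1 ≤ m) (hmodd : Odd m)
    (hcard : Fintype.card F = p ^ m) :
    (univ.filter fun x : F => Algebra.trace (ZMod p) F (x ^ 2) = 0).card = p ^ (m - 1) := by
  have hpp : p.Prime := Fact.out
  have hp2 : p ≠ 2 := by rintro rfl; exact (by decide : ¬ Odd 2) hp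
  haveI : CharP F p := charP_of_injective_algebraMap (algebraMap (ZMod p) F).injective p
  have hrc : ringChar F ≠ 2 := by rw [ringChar.eq F p]; exact hp2
  haveI : FiniteDimensional (ZMod p) F := Module.Finite.of_finite
  haveI : Algebra.IsAlgebraic (ZMod p) F := Algebra.IsAlgebraic.of_finite (ZMod p) F
  obtain ⟨c₀, hc₀⟩ := FiniteField.exists_nonsquare
    (show ringChar (ZMod p) ≠ 2 by rw [ZMod.ringChar_zmod_n]; exact hp2)
  set K := univ.filter fun y : F => Algebra.trace (ZMod p) F y = 0 with hKdef
  have hKcard : K.card = p ^ (m - 1) := by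
    have h := aux_fiber_card (Algebra.trace (ZMod p) F) (Algebra.trace_ne_zero (ZMod p) F) 0
    rw [hcard] at h
    have : p ^ m = p ^ (m - 1) * p := by
      rw [← pow_succ, Nat.sub_add_cancel hm]
    rw [this] at h
    exact Nat.eq_of_mul_eq_mul_right hpp.pos h
  have hfib : (univ.filter fun x : F => Algebra.trace (ZMod p) F (x ^ 2) = 0).card
      = ∑ y ∈ K, (univ.filter fun x : F => x ^ 2 = y).card := by
    refine (Finset.card_eq_sum_card_fiberwise (f := fun x : F => x ^ 2) (t := K) ?_).trans
      (Finset.sum_congr rfl ?_)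
    · intro x hx
      simp only [Finset.mem_coe, hKdef, mem_filter, mem_univ, true_and] at hx ⊢
      exact hx
    · intro y hy
      simp only [hKdef, mem_filter, mem_univ, true_and] at hy
      congr 1
      ext x
      simp only [mem_filter, mem_univ, true_and, and_iff_right_iff_imp]
      intro h
      rw [h]; exact hy
  have hs : ∀ y : F, ((univ.filter fun x : F => x ^ 2 = y).card : ℤ)
      = quadraticChar F y + 1 := by
    intro y
    have h := quadraticChar_card_sqrts hrc y
    rwa [Set.toFinset_setOf] at h
  set c : F := algebraMap (ZMod p) F c₀ with hcdef
  have hcns : ¬ IsSquare c := aux_nonsquare hmodd hcard hc₀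
  have hcchi : quadraticChar F c = -1 := quadraticChar_neg_one_iff_not_isSquare.mpr hcns
  have hcne : c ≠ 0 := fun h => hcns (h ▸ ⟨0, by simp⟩)
  have hc0ne : c₀ ≠ 0 := fun h => hc₀ (h ▸ ⟨0, by simp⟩)
  have hchi : ∑ y ∈ K, (quadraticChar F y : ℤ) = 0 := by
    have reidx : ∑ y ∈ K, (quadraticChar F (c * y) : ℤ) = ∑ y ∈ K, (quadraticChar F y : ℤ) := by
      apply Finset.sum_nbij' (fun y => c * y) (fun y => c⁻¹ * y)
      · intro y hy
        simp only [hKdef, mem_filter, mem_univ, true_and] at hy ⊢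
        rw [hcdef, ← Algebra.smul_def, map_smul, hy, smul_zero]
      · intro y hy
        simp only [hKdef, mem_filter, mem_univ, true_and] at hy ⊢
        rw [show c⁻¹ * y = (c₀⁻¹) • y by
          rw [Algebra.smul_def, map_inv₀, hcdef], map_smul, hy, smul_zero]
      · intro y _; field_simp
      · intro y _; field_simp
      · intro y _; rfl
    have hneg : ∑ y ∈ K, (quadraticChar F (c * y) : ℤ)
        = - ∑ y ∈ K, (quadraticChar F y : ℤ) := by
      rw [← Finset.sum_neg_distrib]
      refine Finset.sum_congr rfl fun y _ => ?_
      rw [map_mul, hcchi]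
      push_cast
      ring
    have := reidx.symm.trans hneg
    linarith
  have hfinal : ((univ.filter fun x : F => Algebra.trace (ZMod p) F (x ^ 2) = 0).card : ℤ)
      = (K.card : ℤ) := by
    rw [hfib]
    push_cast
    rw [Finset.sum_congr rfl fun y _ => hs y, Finset.sum_add_distrib, hchi,
      Finset.sum_const, zero_add]
    simp [mul_comm]
  have : (univ.filter fun x : F => Algebra.trace (ZMod p) F (x ^ 2) = 0).card = K.card := by
    exact_mod_cast hfinal
  rw [this, hKcard]

end Aux

theorem stmt_12 (p m : ℕ) [Fact p.Prime] (hp : Odd p) (hm : 3 ≤ m) (hmodd : Odd m)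
    (F : Type*) [Field F] [Fintype F] [Algebra (ZMod p) F]
    (hcard : Fintype.card F = p ^ m)
    (a : F) (ha : a ≠ 0) (hTa : Algebra.trace (ZMod p) F (a ^ 2) = 0) (ρ : ZMod p) :
    {x : F | Algebra.trace (ZMod p) F (x ^ 2) = 0 ∧
        Algebra.trace (ZMod p) F (a * x) = ρ}.ncard = p ^ (m - 2) := by
  classical
  have hpp : p.Prime := Fact.out
  have hp2 : p ≠ 2 := by rintro rfl; exact (by decide : ¬ Odd 2) hp
  haveI : FiniteDimensional (ZMod p) F := Module.Finite.of_finite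
  haveI : Algebra.IsAlgebraic (ZMod p) F := Algebra.IsAlgebraic.of_finite (ZMod p) F
  have htwo : (2 : ZMod p) ≠ 0 := by
    intro h
    rw [show (2 : ZMod p) = ((2 : ℕ) : ZMod p) by norm_num,
      ZMod.natCast_eq_zero_iff] at h
    exact hp2 ((Nat.prime_dvd_prime_iff_eq hpp Nat.prime_two).mp h)
  set Tr := Algebra.trace (ZMod p) F with hTrdef
  -- the linear functional x ↦ Tr (a * x)
  set φ : F →ₗ[ZMod p] ZMod p := Tr ∘ₗ (LinearMap.mulLeft (ZMod p) a) with hφdef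
  have hφapp : ∀ x : F, φ x = Tr (a * x) := fun x => rfl
  have hφne : φ ≠ 0 := by
    obtain ⟨x₀, hx₀⟩ : ∃ x₀ : F, Tr x₀ ≠ 0 := by
      by_contra h
      push_neg at h
      exact Algebra.trace_ne_zero (ZMod p) F (LinearMap.ext fun x => h x)
    intro h
    apply hx₀
    have := congrArg (fun ψ : F →ₗ[ZMod p] ZMod p => ψ (a⁻¹ * x₀)) h
    simpa [hφapp, mul_inv_cancel_left₀ ha] using this
  -- algebraic expansion facts
  have expand : ∀ (t : ZMod p) (x : F),
      (x + t • a) ^ 2 = x ^ 2 + (2 * t) • (a * x) + (t * t) • (a ^ 2) := by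
    intro t x
    simp only [Algebra.smul_def, map_mul, map_ofNat]
    ring
  have expand' : ∀ (t : ZMod p) (x : F),
      (x - t • a) ^ 2 = x ^ 2 - (2 * t) • (a * x) + (t * t) • (a ^ 2) := by
    intro t x
    simp only [Algebra.smul_def, map_mul, map_ofNat]
    ring
  have amul : ∀ (t : ZMod p) (x : F), a * (x + t • a) = a * x + t • (a ^ 2) := by
    intro t x
    simp only [Algebra.smul_def]
    ring
  have amul' : ∀ (t : ZMod p) (x : F), a * (x - t • a) = a * x - t • (a ^ 2) := by
    intro t x
    simp only [Algebra.smul_def]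
    ring
  -- the key count for σ ≠ 0
  have key : ∀ σ : ZMod p, σ ≠ 0 →
      (univ.filter fun x : F => Tr (x ^ 2) = 0 ∧ Tr (a * x) = σ).card = p ^ (m - 2) := by
    intro σ hσ
    have h2σ : 2 * σ ≠ 0 := mul_ne_zero htwo hσ
    have step1 : ∀ c : ZMod p,
        (univ.filter fun x : F => Tr (x ^ 2) = 0 ∧ Tr (a * x) = σ).card
        = (univ.filter fun x : F => Tr (x ^ 2) = c ∧ Tr (a * x) = σ).card := by
      intro c
      set t : ZMod p := c / (2 * σ) with htdef
      apply Finset.card_nbij' (fun x => x + t • a) (fun x => x - t • a)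
      · intro x hx
        simp only [Finset.mem_coe, mem_filter, mem_univ, true_and] at hx ⊢
        obtain ⟨h1, h2⟩ := hx
        constructor
        · rw [expand, map_add, map_add, map_smul, map_smul, h1, h2, hTa,
            smul_zero, smul_eq_mul, htdef]
          field_simp
          ring
        · rw [amul, map_add, map_smul, h2, hTa, smul_zero, add_zero]
      · intro x hx
        simp only [Finset.mem_coe, mem_filter, mem_univ, true_and] at hx ⊢
        obtain ⟨h1, h2⟩ := hx
        constructor
        · rw [expand', map_add, map_sub, map_smul, map_smul, h1, h2, hTa,
            smul_zero, smul_eq_mul, htdef]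
          field_simp
          ring
        · rw [amul', map_sub, map_smul, h2, hTa, smul_zero, sub_zero]
      · intro x _; ring
      · intro x _; ring
    have step2 : (univ.filter fun x : F => Tr (a * x) = σ).card
        = p * (univ.filter fun x : F => Tr (x ^ 2) = 0 ∧ Tr (a * x) = σ).card := by
      have h := Finset.card_eq_sum_card_fiberwise
        (f := fun x : F => Tr (x ^ 2)) (s := univ.filter fun x : F => Tr (a * x) = σ)
        (t := univ) (fun x _ => mem_univ _)
      rw [h]
      have : ∀ c : ZMod p,
          ((univ.filter fun x : F => Tr (a * x) = σ).filter fun x => Tr (x ^ 2) = c)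
          = univ.filter fun x : F => Tr (x ^ 2) = c ∧ Tr (a * x) = σ := by
        intro c
        rw [Finset.filter_filter]
        congr 1
        ext x
        tauto
      rw [Finset.sum_congr rfl fun c _ => by rw [this c, ← step1 c]]
      rw [Finset.sum_const, card_univ, ZMod.card, smul_eq_mul]
    have step3 : (univ.filter fun x : F => Tr (a * x) = σ).card = p ^ (m - 1) := by
      have h := aux_fiber_card φ hφne σ
      simp only [hφapp] at h
      rw [hcard] at h
      have hpm : p ^ m = p ^ (m - 1) * p := by
        rw [← pow_succ, Nat.sub_add_cancel (by omega)]
      rw [hpm] at h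
      exact Nat.eq_of_mul_eq_mul_right hpp.pos h
    have hpm1 : p ^ (m - 1) = p * p ^ (m - 2) := by
      rw [← pow_succ', show m - 1 = (m - 2) + 1 by omega, pow_succ']
    rw [step3, hpm1] at step2
    exact (Nat.eq_of_mul_eq_mul_left hpp.pos step2).symm
  have hset : {x : F | Tr (x ^ 2) = 0 ∧ Tr (a * x) = ρ}.ncard
      = (univ.filter fun x : F => Tr (x ^ 2) = 0 ∧ Tr (a * x) = ρ).card := by
    rw [← Set.ncard_coe_finset]
    congr 1
    ext x
    simp
  rw [hset]
  by_cases hρ : ρ = 0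
  · subst hρ
    have hM : (univ.filter fun x : F => Tr (x ^ 2) = 0).card = p ^ (m - 1) :=
      aux_quadric_card hp (by omega) hmodd hcard
    have hsplit : (univ.filter fun x : F => Tr (x ^ 2) = 0).card
        = ∑ σ : ZMod p, (univ.filter fun x : F => Tr (x ^ 2) = 0 ∧ Tr (a * x) = σ).card := by
      have h := Finset.card_eq_sum_card_fiberwise
        (f := fun x : F => Tr (a * x)) (s := univ.filter fun x : F => Tr (x ^ 2) = 0)
        (t := univ) (fun x _ => mem_univ _)
      rw [h]
      refine Finset.sum_congr rfl fun σ _ => ?_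
      rw [Finset.filter_filter]
    have hsum : ∑ σ : ZMod p, (univ.filter fun x : F =>
          Tr (x ^ 2) = 0 ∧ Tr (a * x) = σ).card
        = (univ.filter fun x : F => Tr (x ^ 2) = 0 ∧ Tr (a * x) = 0).card
          + (p - 1) * p ^ (m - 2) := by
      rw [← Finset.add_sum_erase _ _ (mem_univ (0 : ZMod p))]
      congr 1
      rw [Finset.sum_congr rfl fun σ hσ => key σ (Finset.ne_of_mem_erase hσ),
        Finset.sum_const, smul_eq_mul, Finset.card_erase_of_mem (mem_univ _),
        card_univ, ZMod.card]
    have heq : p ^ (m - 1)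
        = (univ.filter fun x : F => Tr (x ^ 2) = 0 ∧ Tr (a * x) = 0).card
          + (p - 1) * p ^ (m - 2) := by
      rw [← hM, hsplit, hsum]
    have hpm1 : p ^ (m - 1) = (p - 1) * p ^ (m - 2) + p ^ (m - 2) := by
      have : (p - 1) * p ^ (m - 2) + p ^ (m - 2) = p * p ^ (m - 2) := by
        have hp1 : 1 ≤ p := hpp.pos
        calc (p - 1) * p ^ (m - 2) + p ^ (m - 2) = ((p - 1) + 1) * p ^ (m - 2) := by ring
          _ = p * p ^ (m - 2) := by rw [Nat.sub_add_cancel hp1]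
      rw [this, ← pow_succ', show m - 1 = (m - 2) + 1 by omega, pow_succ']
    omega
  · exact key ρ hρ
end
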